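/- arXiv:1802.05821 — 7 statements merged into one kernel-verified Lean document; each statement's English description precedes it below -/
import Mathlib

section
/- Let E be a real n×e matrix such that every column of E has exactly two nonzero entries, every row of E has exactly k_w nonzero entries, and for any two distinct rows of E there is at most one column index at which both rows have nonzero entries. Then every row of the n×n matrix E·Eᵀ has at most k_w + 1 nonzero entries; consequently the total number of nonzero entries of E·Eᵀ is at most n·(k_w + 1). -/
open Matrix Finset

section Support

variable {m k l R : Type*} [Fintype k] [NonUnitalNonAssocSemiring R]

theorem Matrix.exists_ne_zero_of_mul_apply_ne_zero {A : Matrix m k R} {B : Matrix k l R}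
    {i : m} {i' : l} (h : (A * B) i i' ≠ 0) : ∃ j, A i j ≠ 0 ∧ B j i' ≠ 0 := by
  obtain ⟨j, -, hj⟩ := Finset.exists_ne_zero_of_sum_ne_zero h
  exact ⟨j, left_ne_zero_of_mul hj, right_ne_zero_of_mul hj⟩

theorem Matrix.filter_mul_apply_ne_zero_subset_biUnion [Fintype l] [DecidableEq l]
    [DecidableEq R] (A : Matrix m k R) (B : Matrix k l R) (i : m) :
    univ.filter (fun i' => (A * B) i i' ≠ 0) ⊆
      (univ.filter fun j => A i j ≠ 0).biUnion fun j => univ.filter fun i' => B j i' ≠ 0 := by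
  intro i' hi'
  obtain ⟨j, hij, hji'⟩ := exists_ne_zero_of_mul_apply_ne_zero (mem_filter.1 hi').2
  exact mem_biUnion.2 ⟨j, mem_filter.2 ⟨mem_univ j, hij⟩, mem_filter.2 ⟨mem_univ i', hji'⟩⟩

/-- Every off-diagonal nonzero of row `i` of `A * Aᵀ` comes from a column `j` meeting row `i`,
and such a column has at most `c` further nonzeros. -/
theorem Matrix.card_filter_mul_transpose_apply_ne_zero_le [Fintype m] [DecidableEq m]
    [DecidableEq R] (A : Matrix m k R) (c : ℕ)
    (hcol : ∀ j, #(univ.filter fun i => A i j ≠ 0) ≤ c + 1) (i : m) :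
    #(univ.filter fun i' => (A * Aᵀ) i i' ≠ 0) ≤ #(univ.filter fun j => A i j ≠ 0) * c + 1 := by
  have hsub : (univ.filter fun i' => (A * Aᵀ) i i' ≠ 0).erase i ⊆
      (univ.filter fun j => A i j ≠ 0).biUnion
        fun j => (univ.filter fun i' => A i' j ≠ 0).erase i := by
    rw [← erase_biUnion]
    exact erase_subset_erase i (filter_mul_apply_ne_zero_subset_biUnion A Aᵀ i)
  have hfibre : ∀ j ∈ univ.filter fun j => A i j ≠ 0,
      #((univ.filter fun i' => A i' j ≠ 0).erase i) ≤ c := by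
    intro j hj
    rw [card_erase_of_mem (mem_filter.2 ⟨mem_univ i, (mem_filter.1 hj).2⟩)]
    exact Nat.sub_le_of_le_add (hcol j)
  have herase := (card_le_card hsub).trans (card_biUnion_le_card_mul _ _ c hfibre)
  have hpred := pred_card_le_card_erase (s := univ.filter fun i' => (A * Aᵀ) i i' ≠ 0) (a := i)
  omega

end Support

theorem Finset.card_filter_prod_le {α β : Type*} [Fintype α] [Fintype β] (p : α → β → Prop)
    [∀ a b, Decidable (p a b)] (c : ℕ) (h : ∀ a, #(univ.filter (p a)) ≤ c) :
    #(univ.filter fun q : α × β => p q.1 q.2) ≤ Fintype.card α * c := by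
  rw [card_filter, ← univ_product_univ, sum_product]
  simp_rw [← card_filter]
  exact (sum_le_sum fun a _ => h a).trans_eq (by simp)

theorem nnz_mul_transpose_le_general (n e k_w : ℕ) (E : Matrix (Fin n) (Fin e) ℝ)
    (hcol : ∀ j : Fin e, (univ.filter fun i : Fin n => E i j ≠ 0).card = 2)
    (hrow : ∀ i : Fin n, (univ.filter fun j : Fin e => E i j ≠ 0).card = k_w) :
    (∀ i : Fin n, (univ.filter fun i' : Fin n => (E * Eᵀ) i i' ≠ 0).card ≤ k_w + 1) ∧
    (univ.filter fun q : Fin n × Fin n => (E * Eᵀ) q.1 q.2 ≠ 0).card ≤ n * (k_w + 1) := by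
  have hrowProd (i : Fin n) : (univ.filter fun i' : Fin n => (E * Eᵀ) i i' ≠ 0).card ≤ k_w + 1 := by
    simpa [hrow i] using card_filter_mul_transpose_apply_ne_zero_le E 1 (fun j => (hcol j).le) i
  exact ⟨hrowProd, by simpa using card_filter_prod_le (fun i i' => (E * Eᵀ) i i' ≠ 0) _ hrowProd⟩

/-- if every column of `E` has exactly two nonzeros, every row exactly `k_w`
nonzeros, and any two distinct rows share at most one common nonzero column, then every row of
`E·Eᵀ` has at most `k_w + 1` nonzeros, and `nnz(E·Eᵀ) ≤ n·(k_w + 1)`. -/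
theorem nnz_mul_transpose_le (n e k_w : ℕ) (E : Matrix (Fin n) (Fin e) ℝ)
    (hcol : ∀ j : Fin e, (univ.filter fun i : Fin n => E i j ≠ 0).card = 2)
    (hrow : ∀ i : Fin n, (univ.filter fun j : Fin e => E i j ≠ 0).card = k_w)
    (hpair : ∀ i i' : Fin n, i ≠ i' →
      (univ.filter fun j : Fin e => E i j ≠ 0 ∧ E i' j ≠ 0).card ≤ 1) :
    (∀ i : Fin n, (univ.filter fun i' : Fin n => (E * Eᵀ) i i' ≠ 0).card ≤ k_w + 1) ∧
    (univ.filter fun q : Fin n × Fin n => (E * Eᵀ) q.1 q.2 ≠ 0).card ≤ n * (k_w + 1) :=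
  nnz_mul_transpose_le_general n e k_w E hcol hrow
end

section
/- Fix C > 0 and an integer K ≥ 1, and let S = { −C + 2C·t/K : t = 0, 1, …, K−1 } ⊂ ℝ. Let x_1,…,x_n ∈ ℝ^d be vectors all of whose coordinates lie in S, and assume the x_i are not all equal. For each i ∈ {1,…,n} let K_i = #{ s ∈ {1,…,n} : ‖x_s − x_i‖₂ < 2C/K } (so 1 ≤ K_i < n), set w_{ij} = 1/(K_i·(n − K_i)) for i ≠ j, and let Υ(z) = 0 if z < 2C/K and Υ(z) = 1 if z ≥ 2C/K. Then Σ_{i=1}^n Σ_{j=1}^n w_{ij}·Υ(‖x_i − x_j‖₂) equals the number of distinct vectors among x_1,…,x_n. -/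
/-!
Grid vectors with spacing `h = 2C/K` are at distance `< h` only when they coincide, since two
distinct coordinates already differ by at least `h`. So `Υ(‖x_i - x_j‖)` is the indicator of
`x_i ≠ x_j` and `K_i` is the size of the class of `x_i`. The inner sum over `j` is then
`n - K_i`, which cancels against the weight, and `∑ i, 1 / K_i` counts every class once.
-/

open Finset

section Grid

lemma abs_le_abs_sub_of_mem_grid {a h u v : ℝ} {m k : ℤ} (hu : u = a + h * m)
    (hv : v = a + h * k) (huv : u ≠ v) : |h| ≤ |u - v| := by
  have hmk : m ≠ k := by rintro rfl; exact huv (hu.trans hv.symm)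
  have hone : (1 : ℝ) ≤ |(m : ℝ) - k| := by
    exact_mod_cast Int.one_le_abs (sub_ne_zero.mpr hmk)
  calc |h| = |h| * 1 := (mul_one _).symm
    _ ≤ |h| * |(m : ℝ) - k| := by gcongr
    _ = |u - v| := by rw [← abs_mul, hu, hv]; ring_nf

variable {p : ENNReal} [Fact (1 ≤ p)] {ι : Type*} [Fintype ι]

lemma PiLp.eq_of_dist_lt_of_mem_grid {a h : ℝ} {x y : PiLp p (fun _ : ι => ℝ)}
    (hx : ∀ j, ∃ m : ℤ, x j = a + h * m) (hy : ∀ j, ∃ m : ℤ, y j = a + h * m)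
    (hxy : dist x y < h) : x = y := by
  ext j
  by_contra hne
  obtain ⟨m, hm⟩ := hx j
  obtain ⟨k, hk⟩ := hy j
  have hgap := abs_le_abs_sub_of_mem_grid hm hk hne
  have hcoord : dist (x j) (y j) ≤ dist x y := PiLp.dist_apply_le x y j
  rw [Real.dist_eq] at hcoord
  linarith [le_abs_self h]

lemma PiLp.dist_lt_iff_eq_of_mem_grid {a h : ℝ} (hh : 0 < h) {x y : PiLp p (fun _ : ι => ℝ)}
    (hx : ∀ j, ∃ m : ℤ, x j = a + h * m) (hy : ∀ j, ∃ m : ℤ, y j = a + h * m) :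
    dist x y < h ↔ x = y :=
  ⟨PiLp.eq_of_dist_lt_of_mem_grid hx hy, fun hxy => by rwa [hxy, dist_self]⟩

end Grid

section Fibers

variable {ι α : Type*} [DecidableEq α]

lemma Finset.sum_inv_card_fiber_eq_card_image (s : Finset ι) (f : ι → α) :
    ∑ i ∈ s, ((#{j ∈ s | f j = f i} : ℕ) : ℝ)⁻¹ = #(s.image f) := by
  rw [← sum_fiberwise_of_maps_to (fun i hi => mem_image_of_mem f hi), card_eq_sum_ones,
    Nat.cast_sum]
  refine sum_congr rfl fun b hb => ?_
  obtain ⟨i, hi, rfl⟩ := mem_image.mp hb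
  have hfiber : ∀ j ∈ {j ∈ s | f j = f i}, #{k ∈ s | f k = f j} = #{k ∈ s | f k = f i} :=
    fun j hj => by rw [(mem_filter.mp hj).2]
  rw [sum_congr rfl fun j hj => by rw [hfiber j hj], sum_const, nsmul_eq_mul, Nat.cast_one,
    mul_inv_cancel₀]
  have hpos : 0 < #{j ∈ s | f j = f i} := card_pos.mpr ⟨i, mem_filter.mpr ⟨hi, rfl⟩⟩
  exact_mod_cast hpos.ne'

variable [Fintype ι]

lemma Finset.sum_ite_eq_zero_one_eq_card_sub (f : ι → α) (i : ι) :
    ∑ j, (if f i = f j then (0 : ℝ) else 1) = Fintype.card ι - #{s | f s = f i} := by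
  classical
  rw [sum_ite, sum_const_zero, zero_add, sum_const, nsmul_one, filter_not,
    card_sdiff_of_subset (filter_subset _ _), card_univ, Nat.cast_sub (card_le_univ _)]
  simp only [eq_comm]

theorem Finset.sum_sum_weight_mul_ite_eq_card_image {f : ι → α} (hf : ∃ i j, f i ≠ f j) :
    ∑ i, ∑ j, 1 / ((#{s | f s = f i} : ℝ) * (Fintype.card ι - #{s | f s = f i})) *
        (if f i = f j then (0 : ℝ) else 1) = #(univ.image f) := by
  rw [← sum_inv_card_fiber_eq_card_image]
  refine sum_congr rfl fun i _ => ?_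
  rw [← mul_sum, sum_ite_eq_zero_one_eq_card_sub]
  obtain ⟨a, b, hab⟩ := hf
  have hout : ∃ c, f c ≠ f i := by
    by_contra! h
    exact hab ((h a).trans (h b).symm)
  obtain ⟨c, hc⟩ := hout
  have hlt : #{s | f s = f i} < Fintype.card ι :=
    card_lt_univ_of_notMem (x := c) (by simpa using hc)
  have hcompl : (Fintype.card ι : ℝ) - #{s | f s = f i} ≠ 0 :=
    sub_ne_zero.mpr (by exact_mod_cast hlt.ne')
  rw [one_div, mul_inv, mul_assoc, inv_mul_cancel₀ hcompl, mul_one]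

end Fibers

theorem weighted_pairwise_sum_counts_groups_general (C : ℝ) (hC : 0 < C) (K : ℕ) (hK : 1 ≤ K)
    (n d : ℕ) (x : Fin n → EuclideanSpace ℝ (Fin d))
    (hS : ∀ i j, ∃ t : ℕ, t < K ∧ x i j = -C + 2 * C * t / K)
    (hne : ∃ i j, x i ≠ x j)
    (Ki : Fin n → ℕ)
    (hKi : ∀ i, Ki i = (Finset.univ.filter fun s => ‖x s - x i‖ < 2 * C / K).card) :
    ∑ i, ∑ j, (1 / ((Ki i : ℝ) * ((n : ℝ) - (Ki i : ℝ)))) *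
        (if ‖x i - x j‖ < 2 * C / K then (0 : ℝ) else 1)
      = ((Set.range x).ncard : ℝ) := by
  have hgrid : ∀ i j, ∃ m : ℤ, x i j = -C + 2 * C / K * m := fun i j => by
    obtain ⟨t, -, ht⟩ := hS i j
    exact ⟨t, by rw [ht]; push_cast; ring⟩
  have hsep : ∀ s i, ‖x s - x i‖ < 2 * C / K ↔ x s = x i := fun s i => by
    rw [← dist_eq_norm]
    exact PiLp.dist_lt_iff_eq_of_mem_grid (by positivity) (hgrid s) (hgrid i)
  simp only [hsep] at hKi ⊢
  obtain rfl : Ki = fun i => #{s | x s = x i} := funext hKi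
  have hsum := sum_sum_weight_mul_ite_eq_card_image hne
  rw [Fintype.card_fin] at hsum
  rw [hsum, ← Set.ncard_coe_finset, coe_image, coe_univ, Set.image_univ]

/-- with grid-valued vectors `x_i`, weights `w_{ij} = 1/(K_i(n−K_i))` and the
threshold indicator `Υ`, the weighted pairwise sum counts the distinct vectors. -/
theorem weighted_pairwise_sum_counts_groups (C : ℝ) (hC : 0 < C) (K : ℕ) (hK : 1 ≤ K)
    (n d : ℕ) (hn : 0 < n) (x : Fin n → EuclideanSpace ℝ (Fin d))
    (hS : ∀ i j, ∃ t : ℕ, t < K ∧ x i j = -C + 2 * C * t / K)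
    (hne : ∃ i j, x i ≠ x j)
    (Ki : Fin n → ℕ)
    (hKi : ∀ i, Ki i = (Finset.univ.filter fun s => ‖x s - x i‖ < 2 * C / K).card) :
    ∑ i, ∑ j, (1 / ((Ki i : ℝ) * ((n : ℝ) - (Ki i : ℝ)))) *
        (if ‖x i - x j‖ < 2 * C / K then (0 : ℝ) else 1)
      = ((Set.range x).ncard : ℝ) :=
  weighted_pairwise_sum_counts_groups_general C hC K hK n d x hS hne Ki hKi
end

section
/- Let S be a finite set and let n, d, g be positive integers with g ≤ n. Then the number of n×d matrices with all entries in S that have exactly g distinct rows is at most n^n · |S|^{d·g}. -/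
/-- the number of `n×d` matrices with entries in a finite set `S` having exactly
`g` distinct rows is at most `n^n · |S|^(d·g)`. -/
theorem count_matrices_with_exactly_g_distinct_rows {α : Type*} (S : Finset α)
    (n d g : ℕ) (hn : 0 < n) (hd : 0 < d) (hg : 0 < g) (hgn : g ≤ n) :
    Set.ncard {X : Fin n → Fin d → α |
        (∀ i j, X i j ∈ S) ∧ (Set.range X).ncard = g}
      ≤ n ^ n * S.card ^ (d * g) := by
  classical
  set A : Set (Fin n → Fin d → α) :=
    {X : Fin n → Fin d → α | (∀ i j, X i j ∈ S) ∧ (Set.range X).ncard = g} with hA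
  rcases A.eq_empty_or_nonempty with hE | ⟨X₀, hX₀⟩
  · simp [hE]
  haveI : Inhabited α := ⟨X₀ ⟨0, hn⟩ ⟨0, hd⟩⟩
  haveI : Nonempty (Fin g) := ⟨⟨0, hg⟩⟩
  -- the coding function
  set f : (Fin n → Fin d → α) → (Fin n → Fin g) × (Fin g → Fin d → α) :=
    fun X =>
      if h : (Set.finite_range X).toFinset.card = g then
        (fun i => (Finset.equivFinOfCardEq h) ⟨X i, by simp⟩,
         fun k => ((Finset.equivFinOfCardEq h).symm k : Fin d → α))
      else Classical.arbitrary _ with hf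
  have hcard : ∀ X ∈ A, (Set.finite_range X).toFinset.card = g := by
    intro X hX
    rw [← Set.ncard_eq_toFinset_card (Set.range X) (Set.finite_range X)]
    exact hX.2
  set T : Finset ((Fin n → Fin g) × (Fin g → Fin d → α)) :=
    Finset.univ ×ˢ Fintype.piFinset (fun _ : Fin g => Fintype.piFinset fun _ : Fin d => S)
    with hT
  have hmaps : ∀ X ∈ A, f X ∈ (T : Set _) := by
    intro X hX
    have h := hcard X hX
    simp only [hf, dif_pos h]
    simp only [Finset.mem_coe, hT, Finset.mem_product, Finset.mem_univ, true_and,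
      Fintype.mem_piFinset]
    intro k j
    have hmem : (((Finset.equivFinOfCardEq h).symm k : _) : Fin d → α) ∈ Set.range X := by
      have := ((Finset.equivFinOfCardEq h).symm k).2
      simpa using this
    obtain ⟨i, hi⟩ := hmem
    rw [← hi]
    exact hX.1 i j
  have hinj : Set.InjOn f A := by
    intro X hX Y hY hXY
    have hX' := hcard X hX
    have hY' := hcard Y hY
    funext i
    have h1 : (f X).2 ((f X).1 i) = X i := by
      simp only [hf, dif_pos hX']
      simp
    have h2 : (f Y).2 ((f Y).1 i) = Y i := by
      simp only [hf, dif_pos hY']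
      simp
    rw [← h1, ← h2, hXY]
  have hle : A.ncard ≤ (T : Set _).ncard :=
    Set.ncard_le_ncard_of_injOn f hmaps hinj (T.finite_toSet)
  rw [Set.ncard_coe_finset] at hle
  have hTcard : T.card = g ^ n * (S.card ^ d) ^ g := by
    simp [hT, Fintype.card_piFinset]
  refine hle.trans ?_
  rw [hTcard, ← pow_mul]
  gcongr
end

section
/- Let n ≥ 1, d ≥ 1, κ ≥ 0 be integers, let K = 2^κ, and let S ⊂ ℝ be a set of cardinality K. Let 𝒳 be the (finite) set of all n×d matrices with entries in S, and for X ∈ 𝒳 let g(X) denote the number of distinct rows of X. Then Σ_{X ∈ 𝒳} 2^{−( (n+1)·⌈log₂ n⌉ + d·κ·g(X) )} ≤ 1. -/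
open BigOperators

/-- Kraft-type inequality for the encoding of matrices with entries in a set of
cardinality `K = 2^κ`, penalized by `(n+1)⌈log₂ n⌉ + d·κ·g(X)` bits, where `g(X)` is the
number of distinct rows of `X`. -/
theorem kraft_inequality_matrix_rows (n d κ : ℕ) (hn : 0 < n) (hd : 0 < d)
    (S : Finset ℝ) (hS : S.card = 2 ^ κ) :
    ∑ X : Fin n → Fin d → ↥S,
      ((2 : ℝ) ^ ((n + 1) * Nat.clog 2 n + d * κ * (Set.range X).ncard))⁻¹ ≤ 1 := by
  classical
  set T := (Fin d → ↥S) with hTdef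
  set A := (n + 1) * Nat.clog 2 n with hA
  have hT : Fintype.card T = 2 ^ (d * κ) := by
    simp [hTdef, Fintype.card_fun, hS, ← pow_mul, mul_comm]
  -- toFinset of range
  have hrange : ∀ X : Fin n → T, (Set.finite_range X).toFinset = Finset.univ.image X := by
    intro X; ext t; simp
  have hle : ∀ X : Fin n → T, (Set.range X).ncard ≤ n := by
    intro X
    rw [Set.ncard_eq_toFinset_card _ (Set.finite_range X), hrange]
    calc (Finset.univ.image X).card ≤ (Finset.univ : Finset (Fin n)).card :=
          Finset.card_image_le
      _ = n := by simp
  have hpos : ∀ X : Fin n → T, 0 < (Set.range X).ncard := by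
    intro X
    haveI : Nonempty (Fin n) := ⟨⟨0, hn⟩⟩
    rw [Set.ncard_pos (Set.finite_range X)]
    exact Set.range_nonempty _
  -- fiber card bound
  have key : ∀ m : ℕ, 0 < m →
      ((Finset.univ.filter (fun X : Fin n → T => (Set.range X).ncard = m)).card : ℕ)
        ≤ m ^ n * (2 ^ (d * κ)) ^ m := by
    intro m hm
    set enc : (Fin n → T) → (Fin n → Fin m) × (Fin m → T) := fun X =>
      if h : (Set.finite_range X).toFinset.card = m then
        ((fun i => ((Set.finite_range X).toFinset.equivFinOfCardEq h)
            ⟨X i, by simp [Set.Finite.mem_toFinset]⟩),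
         (fun j => (((Set.finite_range X).toFinset.equivFinOfCardEq h).symm j : T)))
      else ((fun _ => ⟨0, hm⟩), (fun _ => X ⟨0, hn⟩)) with henc
    have hprop : ∀ X : Fin n → T, (Set.range X).ncard = m →
        ∀ i, (enc X).2 ((enc X).1 i) = X i := by
      intro X hX i
      have h : (Set.finite_range X).toFinset.card = m := by
        rw [← Set.ncard_eq_toFinset_card _ (Set.finite_range X)]; exact hX
      simp only [henc, dif_pos h]
      exact congrArg Subtype.val (Equiv.symm_apply_apply _ _)
    have hinj : Set.InjOn enc
        (Finset.univ.filter (fun X : Fin n → T => (Set.range X).ncard = m)) := by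
      intro X hX Y hY hXY
      simp only [Finset.coe_filter, Set.mem_setOf_eq] at hX hY
      funext i
      rw [← hprop X hX.2 i, ← hprop Y hY.2 i, hXY]
    have hcard := Finset.card_le_card_of_injOn enc
      (fun X _ => Finset.mem_univ (enc X)) hinj
    calc (Finset.univ.filter (fun X : Fin n → T => (Set.range X).ncard = m)).card
        ≤ (Finset.univ : Finset ((Fin n → Fin m) × (Fin m → T))).card := hcard
      _ = m ^ n * (2 ^ (d * κ)) ^ m := by
          simp [Fintype.card_fun, hT]
  -- rewrite sum fiberwise
  have hfib : ∑ X : Fin n → T, ((2 : ℝ) ^ (A + d * κ * (Set.range X).ncard))⁻¹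
      = ∑ m ∈ Finset.Icc 1 n,
          ∑ X ∈ Finset.univ.filter (fun X : Fin n → T => (Set.range X).ncard = m),
            ((2 : ℝ) ^ (A + d * κ * (Set.range X).ncard))⁻¹ := by
    rw [Finset.sum_fiberwise_of_maps_to]
    intro X _
    simp only [Finset.mem_Icc]
    exact ⟨hpos X, hle X⟩
  rw [hfib]
  have step : ∀ m ∈ Finset.Icc 1 n,
      ∑ X ∈ Finset.univ.filter (fun X : Fin n → T => (Set.range X).ncard = m),
        ((2 : ℝ) ^ (A + d * κ * (Set.range X).ncard))⁻¹
      ≤ ((n : ℝ) ^ n) * ((2 : ℝ) ^ A)⁻¹ := by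
    intro m hm
    simp only [Finset.mem_Icc] at hm
    have h1 : ∑ X ∈ Finset.univ.filter (fun X : Fin n → T => (Set.range X).ncard = m),
        ((2 : ℝ) ^ (A + d * κ * (Set.range X).ncard))⁻¹
        = ((Finset.univ.filter (fun X : Fin n → T => (Set.range X).ncard = m)).card : ℝ)
          * ((2 : ℝ) ^ (A + d * κ * m))⁻¹ := by
      rw [Finset.sum_congr rfl (fun X hX => by
        rw [(Finset.mem_filter.mp hX).2]), Finset.sum_const, nsmul_eq_mul]
    rw [h1]
    have h2 : ((Finset.univ.filter (fun X : Fin n → T => (Set.range X).ncard = m)).card : ℝ)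
        ≤ (m : ℝ) ^ n * (2 : ℝ) ^ (d * κ * m) := by
      have := key m hm.1
      calc ((Finset.univ.filter (fun X : Fin n → T => (Set.range X).ncard = m)).card : ℝ)
          ≤ ((m ^ n * (2 ^ (d * κ)) ^ m : ℕ) : ℝ) := by exact_mod_cast this
        _ = (m : ℝ) ^ n * (2 : ℝ) ^ (d * κ * m) := by
            push_cast [← pow_mul]; ring
    calc ((Finset.univ.filter (fun X : Fin n → T => (Set.range X).ncard = m)).card : ℝ)
          * ((2 : ℝ) ^ (A + d * κ * m))⁻¹
        ≤ ((m : ℝ) ^ n * (2 : ℝ) ^ (d * κ * m)) * ((2 : ℝ) ^ (A + d * κ * m))⁻¹ := by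
          apply mul_le_mul_of_nonneg_right h2 (by positivity)
      _ = (m : ℝ) ^ n * ((2 : ℝ) ^ A)⁻¹ := by
          rw [pow_add]; field_simp
      _ ≤ ((n : ℝ) ^ n) * ((2 : ℝ) ^ A)⁻¹ := by
          apply mul_le_mul_of_nonneg_right _ (by positivity)
          exact pow_le_pow_left₀ (by positivity) (by exact_mod_cast hm.2) n
  calc ∑ m ∈ Finset.Icc 1 n,
        ∑ X ∈ Finset.univ.filter (fun X : Fin n → T => (Set.range X).ncard = m),
          ((2 : ℝ) ^ (A + d * κ * (Set.range X).ncard))⁻¹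
      ≤ ∑ m ∈ Finset.Icc 1 n, ((n : ℝ) ^ n) * ((2 : ℝ) ^ A)⁻¹ := Finset.sum_le_sum step
    _ = (n : ℝ) * ((n : ℝ) ^ n * ((2 : ℝ) ^ A)⁻¹) := by
        rw [Finset.sum_const, Nat.card_Icc]; simp [nsmul_eq_mul]
    _ ≤ 1 := by
        rw [← mul_assoc]
        have hnat : n * n ^ n ≤ 2 ^ A := by
          calc n * n ^ n = n ^ (n + 1) := by ring
            _ ≤ (2 ^ Nat.clog 2 n) ^ (n + 1) :=
                Nat.pow_le_pow_left (Nat.le_pow_clog one_lt_two n) _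
            _ = 2 ^ A := by rw [← pow_mul, hA, mul_comm]
        have h2A : (0 : ℝ) < (2 : ℝ) ^ A := by positivity
        have hcast : (n : ℝ) * (n : ℝ) ^ n ≤ (2 : ℝ) ^ A := by exact_mod_cast hnat
        rw [mul_inv_le_iff₀ h2A]
        linarith
end

section
/- For t > 0 and γ > 0, define the minimax concave penalty p_MCP : ℝ → ℝ by p_MCP(z) = γ|z| − z²/(2t) if |z| ≤ γ·t, and p_MCP(z) = t·γ²/2 if |z| > γ·t. Then for every dimension d ≥ 1, every v ∈ ℝ^d, and every ς > 1/(2t), the function u ↦ ς‖u − v‖₂² + p_MCP(‖u‖₂) is strongly convex on ℝ^d with modulus 2ς − 1/t, i.e., u ↦ ς‖u − v‖₂² + p_MCP(‖u‖₂) − ((2ς − 1/t)/2)‖u‖₂² is convex on ℝ^d. -/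
/-!
Since `‖u - v‖² = ‖u‖² - 2⟪u, v⟫ + ‖v‖²`, the quadratic terms leave exactly `‖u‖² / (2t)`, and
`p_MCP(z) + z² / (2t) = γ|z| + (|z| - γt)₊² / (2t)`. So the function equals
`γ‖u‖ + (‖u‖ - γt)₊² / (2t)` plus an affine function of `u`; the first term is convex
as a multiple of a norm and the second as the square of a nonnegative convex function.
-/

open Set

theorem mcp_add_sq_div_eq {t : ℝ} (ht : t ≠ 0) (γ z : ℝ) :
    (if |z| ≤ γ * t then γ * |z| - z ^ 2 / (2 * t) else t * γ ^ 2 / 2) + z ^ 2 / (2 * t) =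
      γ * |z| + max (|z| - γ * t) 0 ^ 2 / (2 * t) := by
  rw [← sq_abs z]
  split_ifs with h
  · rw [max_eq_right (by linarith)]
    ring
  · rw [max_eq_left (by linarith)]
    field_simp
    ring

theorem convexOn_univ_sq_posPart_norm_sub {E : Type*} [SeminormedAddCommGroup E]
    [NormedSpace ℝ E] (c : ℝ) :
    ConvexOn ℝ univ fun u : E => max (‖u‖ - c) 0 ^ 2 :=
  ((convexOn_univ_norm.sub (concaveOn_const c convex_univ)).sup
    (convexOn_const 0 convex_univ)).pow (fun _ _ => le_max_right _ _) 2

theorem mcp_prox_strongly_convex_general (t γ : ℝ) (ht : 0 < t) (hγ : 0 < γ)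
    (pMCP : ℝ → ℝ)
    (hp : pMCP = fun z =>
      if |z| ≤ γ * t then γ * |z| - z ^ 2 / (2 * t) else t * γ ^ 2 / 2)
    (d : ℕ) (v : EuclideanSpace ℝ (Fin d)) (ς : ℝ) :
    ConvexOn ℝ Set.univ (fun u : EuclideanSpace ℝ (Fin d) =>
      ς * ‖u - v‖ ^ 2 + pMCP ‖u‖ - ((2 * ς - 1 / t) / 2) * ‖u‖ ^ 2) := by
  have hdecomp : (fun u : EuclideanSpace ℝ (Fin d) =>
      ς * ‖u - v‖ ^ 2 + pMCP ‖u‖ - ((2 * ς - 1 / t) / 2) * ‖u‖ ^ 2) =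
      fun u => γ * ‖u‖ + (2 * t)⁻¹ * max (‖u‖ - γ * t) 0 ^ 2 +
        (innerₛₗ ℝ ((-2 * ς) • v) u + ς * ‖v‖ ^ 2) := by
    funext u
    have hmcp := mcp_add_sq_div_eq ht.ne' γ ‖u‖
    rw [abs_norm] at hmcp
    rw [hp, norm_sub_sq_real, innerₛₗ_apply_apply, real_inner_smul_left, real_inner_comm]
    simp only [abs_norm]
    linear_combination hmcp
  rw [hdecomp]
  exact ((convexOn_univ_norm.smul hγ.le).add
    ((convexOn_univ_sq_posPart_norm_sub _).smul (by positivity))).add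
    (((innerₛₗ ℝ ((-2 * ς) • v)).convexOn convex_univ).add_const _)

/-- the MCP penalty composed with the norm, plus `ς‖u−v‖²` with `ς > 1/(2t)`,
is strongly convex with modulus `2ς − 1/t`. -/
theorem mcp_prox_strongly_convex (t γ : ℝ) (ht : 0 < t) (hγ : 0 < γ)
    (pMCP : ℝ → ℝ)
    (hp : pMCP = fun z =>
      if |z| ≤ γ * t then γ * |z| - z ^ 2 / (2 * t) else t * γ ^ 2 / 2)
    (d : ℕ) (hd : 1 ≤ d) (v : EuclideanSpace ℝ (Fin d)) (ς : ℝ) (hς : 1 / (2 * t) < ς) :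
    ConvexOn ℝ Set.univ (fun u : EuclideanSpace ℝ (Fin d) =>
      ς * ‖u - v‖ ^ 2 + pMCP ‖u‖ - ((2 * ς - 1 / t) / 2) * ‖u‖ ^ 2) :=
  mcp_prox_strongly_convex_general t γ ht hγ pMCP hp d v ς
end

section
/- For γ > 0 and b > 0, define the M-type penalty p_M : ℝ → ℝ by p_M(z) = −γ(z² − 2b|z|) if |z| < 2b, and p_M(z) = 0 if |z| ≥ 2b. Then for every dimension d ≥ 1, every v ∈ ℝ^d, and every ς > γ, the function u ↦ ς‖u − v‖₂² + p_M(‖u‖₂) is strongly convex on ℝ^d with modulus 2(ς − γ), i.e., u ↦ ς‖u − v‖₂² + p_M(‖u‖₂) − (ς − γ)‖u‖₂² is convex on ℝ^d. -/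
/-! Adding `γ t²` to the M-type penalty at `t = ‖u‖` gives `max (2γbt) (γt²)`: below the
threshold `2b` the first term is the larger one, above it the second. Expanding `‖u - v‖²`,
the function in question is thus `max (2γb‖u‖) (γ‖u‖²)` plus an affine function of `u`, and
a maximum of two convex functions is convex. -/

open Set

lemma mtype_penalty_add_mul_sq_eq_max {γ : ℝ} (hγ : 0 ≤ γ) (b t : ℝ) :
    (if |t| < 2 * b then -γ * (t ^ 2 - 2 * b * |t|) else 0) + γ * t ^ 2
      = max (2 * γ * b * |t|) (γ * t ^ 2) := by
  have hγt : 0 ≤ γ * |t| := mul_nonneg hγ (abs_nonneg t)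
  rw [← sq_abs t]
  split_ifs with h
  · rw [max_eq_left (by nlinarith)]
    ring
  · rw [max_eq_right (by nlinarith)]
    ring

lemma convexOn_univ_max_mul_norm_mul_norm_sq {E : Type*} [SeminormedAddCommGroup E]
    [NormedSpace ℝ E] {c γ : ℝ} (hc : 0 ≤ c) (hγ : 0 ≤ γ) :
    ConvexOn ℝ univ (fun u : E => max (c * ‖u‖) (γ * ‖u‖ ^ 2)) :=
  (convexOn_univ_norm.smul hc).sup
    ((convexOn_univ_norm.pow (fun _ _ => norm_nonneg _) 2).smul hγ)

lemma convexOn_univ_const_sub_mul_inner {E : Type*} [NormedAddCommGroup E]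
    [InnerProductSpace ℝ E] (v : E) (a c : ℝ) :
    ConvexOn ℝ univ (fun u : E => c - a * inner ℝ u v) := by
  refine ((convexOn_const c convex_univ).add
    (((-a) • innerSL ℝ v).toLinearMap.convexOn convex_univ)).congr fun u _ => ?_
  simp [real_inner_comm, sub_eq_add_neg]

theorem mtype_prox_strongly_convex_general (γ b : ℝ) (hγ : 0 < γ) (hb : 0 < b)
    (pM : ℝ → ℝ)
    (hp : pM = fun z => if |z| < 2 * b then -γ * (z ^ 2 - 2 * b * |z|) else 0)
    (d : ℕ) (v : EuclideanSpace ℝ (Fin d)) (ς : ℝ) :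
    ConvexOn ℝ Set.univ (fun u : EuclideanSpace ℝ (Fin d) =>
      ς * ‖u - v‖ ^ 2 + pM ‖u‖ - (ς - γ) * ‖u‖ ^ 2) := by
  have hmax := convexOn_univ_max_mul_norm_mul_norm_sq (E := EuclideanSpace ℝ (Fin d))
    (by positivity : 0 ≤ 2 * γ * b) hγ.le
  have haff := convexOn_univ_const_sub_mul_inner v (2 * ς) (ς * ‖v‖ ^ 2)
  refine (hmax.add haff).congr fun u _ => ?_
  have hpen := mtype_penalty_add_mul_sq_eq_max hγ.le b ‖u‖
  rw [abs_norm] at hpen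
  simp only [hp, abs_norm, Pi.add_apply]
  rw [← hpen, norm_sub_sq_real]
  ring

/-- the M-type penalty composed with the norm, plus `ς‖u−v‖²` with `ς > γ`,
is strongly convex with modulus `2(ς − γ)`. -/
theorem mtype_prox_strongly_convex (γ b : ℝ) (hγ : 0 < γ) (hb : 0 < b)
    (pM : ℝ → ℝ)
    (hp : pM = fun z => if |z| < 2 * b then -γ * (z ^ 2 - 2 * b * |z|) else 0)
    (d : ℕ) (hd : 1 ≤ d) (v : EuclideanSpace ℝ (Fin d)) (ς : ℝ) (hς : γ < ς) :
    ConvexOn ℝ Set.univ (fun u : EuclideanSpace ℝ (Fin d) =>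
      ς * ‖u - v‖ ^ 2 + pM ‖u‖ - (ς - γ) * ‖u‖ ^ 2) :=
  mtype_prox_strongly_convex_general γ b hγ hb pM hp d v ς
end

section
/- Let n, d, e be positive integers, let E ∈ ℝ^{n×e}, G ∈ ℝ^{nd×nd}, b ∈ ℝ^{nd}, α, η ∈ ℝ, X, X' ∈ ℝ^{n×d}, and P, Λ ∈ ℝ^{d×e}. Suppose that [ G + (η·E·Eᵀ + (α+1)·I_n) ⊗ I_d ]·vec(X'ᵀ) = b + vec( Xᵀ + η·P·Eᵀ + Λ·Eᵀ ), and define Λ' = Λ + η·(P − X'ᵀ·E). Then vec(Λ'·Eᵀ) = ( G + (α+1)·I_{nd} )·vec(X'ᵀ) − b − vec(Xᵀ). -/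
open Matrix Kronecker

/-- `vec(A)` obtained by stacking the columns of `A`; with this convention
`vec(A·B) = (Bᵀ ⊗ I)·vec(A)`. -/
def vecCols {r c : ℕ} (A : Matrix (Fin r) (Fin c) ℝ) : Fin c × Fin r → ℝ :=
  fun p => A p.2 p.1

/-- if `vec(X'ᵀ)` solves the linear system
`[G + (ηEEᵀ + (α+1)I_n) ⊗ I_d] vec(X'ᵀ) = b + vec(Xᵀ + ηPEᵀ + ΛEᵀ)` and
`Λ' = Λ + η(P − X'ᵀE)`, then `vec(Λ'Eᵀ) = (G + (α+1)I_{nd}) vec(X'ᵀ) − b − vec(Xᵀ)`. -/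
theorem dual_update_identity (n d e : ℕ) (hn : 0 < n) (hd : 0 < d) (he : 0 < e)
    (E : Matrix (Fin n) (Fin e) ℝ)
    (G : Matrix (Fin n × Fin d) (Fin n × Fin d) ℝ)
    (b : Fin n × Fin d → ℝ) (α η : ℝ)
    (X X' : Matrix (Fin n) (Fin d) ℝ)
    (P Λ Λ' : Matrix (Fin d) (Fin e) ℝ)
    (hsys : (G + (η • (E * Eᵀ) + (α + 1) • (1 : Matrix (Fin n) (Fin n) ℝ)) ⊗ₖ
        (1 : Matrix (Fin d) (Fin d) ℝ)).mulVec (vecCols X'ᵀ)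
      = b + vecCols (Xᵀ + η • (P * Eᵀ) + Λ * Eᵀ))
    (hΛ' : Λ' = Λ + η • (P - X'ᵀ * E)) :
    vecCols (Λ' * Eᵀ)
      = (G + (α + 1) • (1 : Matrix (Fin n × Fin d) (Fin n × Fin d) ℝ)).mulVec (vecCols X'ᵀ)
        - b - vecCols Xᵀ := by
  subst hΛ'
  funext p
  obtain ⟨i, j⟩ := p
  have h := congrFun hsys (i, j)
  simp [vecCols, mulVec, dotProduct, kroneckerMap_apply, Matrix.add_apply, Matrix.mul_apply,
    Matrix.smul_apply, Matrix.one_apply, Fintype.sum_prod_type, Finset.mul_sum, Finset.sum_mul,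
    add_mul, mul_add, sub_mul, mul_sub, mul_ite, ite_mul, Finset.sum_ite_eq, Finset.sum_ite_eq',
    Finset.sum_sub_distrib, Finset.sum_add_distrib, mul_comm, mul_assoc, mul_left_comm,
    transpose_apply, Pi.add_apply, Pi.sub_apply] at h ⊢
  have hc : ∑ x : Fin e, ∑ x_1 : Fin n, η * (E i x * (E x_1 x * X' x_1 j))
      = ∑ x : Fin n, ∑ x_1 : Fin e, η * (E i x_1 * (E x x_1 * X' x j)) := by
    rw [Finset.sum_comm]
  linarith [h, hc]
end
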